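/- The map α ↦ I_{a⁺}^{α} from (0,∞) to the bounded operators on L¹[a,b] (with the operator norm) is continuous. -/

import Mathlib

/-!
On `[a, b]` the difference `I^β f - I^α f` is the truncated convolution of `f` with
`k_β - k_α`, where `k_γ u = u ^ (γ - 1) / Γ(γ)`. By Tonelli and translation invariance its
`L¹` norm is at most `‖k_β - k_α‖_{L¹(0, b - a)} ‖f‖_{L¹(a, b)}`, and `k_β → k_α` in
`L¹(0, b - a)` as `β → α` by dominated convergence: for `β ∈ [α/2, 2α]` the kernel `k_β u` is
bounded by a multiple of `u ^ (α/2 - 1) + u ^ (2α - 1)`, since `1/Γ` is bounded on compacts of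
`(0, ∞)`.
-/

open MeasureTheory Set

/-- Riemann–Liouville fractional integral of order `α` with base point `a`. -/
noncomputable def RL (a α : ℝ) (f : ℝ → ℝ) (t : ℝ) : ℝ :=
  ∫ s in a..t, (t - s) ^ (α - 1) / Real.Gamma α * f s

open Filter Topology
open scoped ENNReal

namespace MeasureTheory

/-- No integrability is needed: if exactly one of `f`, `g` is integrable the right-hand side is
infinite, and if neither is, both integrals are `0`. -/
theorem enorm_integral_sub_le_lintegral_enorm_sub {X E : Type*} [MeasurableSpace X]
    {μ : Measure X} [NormedAddCommGroup E] [NormedSpace ℝ E] {f g : X → E}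
    (hf : AEStronglyMeasurable f μ) (hg : AEStronglyMeasurable g μ) :
    ‖∫ x, f x ∂μ - ∫ x, g x ∂μ‖ₑ ≤ ∫⁻ x, ‖f x - g x‖ₑ ∂μ := by
  by_cases hfg : Integrable (f - g) μ
  · by_cases hf' : Integrable f μ
    · have hg' : Integrable g μ := by simpa using hf'.sub hfg
      rw [← integral_sub hf' hg']
      exact enorm_integral_le_lintegral_enorm _
    · have hg' : ¬Integrable g μ := fun hg' => hf' (by simpa using hfg.add hg')
      simp [integral_undef hf', integral_undef hg']
  · have hinf : ∫⁻ x, ‖f x - g x‖ₑ ∂μ = ⊤ :=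
      not_lt_top_iff.mp fun h => hfg ⟨hf.sub hg, h⟩
    simp [hinf]

theorem lintegral_lintegral_sub_mul {G : Type*} [AddGroup G] [MeasurableSpace G]
    [MeasurableAdd G] [MeasurableSub₂ G] {μ ν : Measure G} [SFinite μ] [SFinite ν]
    [μ.IsAddRightInvariant] {k f : G → ℝ≥0∞} (hk : Measurable k) (hf : AEMeasurable f ν) :
    ∫⁻ t, ∫⁻ x, k (t - x) * f x ∂ν ∂μ = (∫⁻ u, k u ∂μ) * ∫⁻ x, f x ∂ν := by
  rw [lintegral_lintegral_swap ((hk.comp measurable_sub).aemeasurable.mul hf.comp_snd),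
    ← lintegral_const_mul'' _ hf]
  refine lintegral_congr fun x => ?_
  have hkx : Measurable fun t => k (t - x) := hk.comp (measurable_sub_const x)
  rw [lintegral_mul_const _ hkx, lintegral_sub_right_eq_self]

end MeasureTheory

theorem Real.rpow_le_rpow_add_rpow {x p q r : ℝ} (hx : 0 < x) (hr : r ∈ Icc p q) :
    x ^ r ≤ x ^ p + x ^ q := by
  rcases le_or_gt x 1 with hx1 | hx1
  · linarith [Real.rpow_le_rpow_of_exponent_ge hx hx1 hr.1, Real.rpow_nonneg hx.le q]
  · linarith [Real.rpow_le_rpow_of_exponent_le hx1.le hr.2, Real.rpow_nonneg hx.le p]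

noncomputable def rlKernel (γ u : ℝ) : ℝ := u ^ (γ - 1) / Real.Gamma γ

theorem RL_eq_setIntegral_rlKernel {a t : ℝ} (ht : a ≤ t) (γ : ℝ) (f : ℝ → ℝ) :
    RL a γ f t = ∫ s in Ioc a t, rlKernel γ (t - s) * f s := by
  rw [RL, intervalIntegral.integral_of_le ht]
  rfl

theorem measurable_rlKernel (γ : ℝ) : Measurable (rlKernel γ) := by
  unfold rlKernel
  fun_prop

theorem integrableOn_rlKernel {γ : ℝ} (hγ : 0 < γ) (L : ℝ) :
    IntegrableOn (rlKernel γ) (Ioc 0 L) :=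
  (intervalIntegral.intervalIntegrable_rpow' (by linarith : -1 < γ - 1)).1.div_const _

theorem continuousAt_rlKernel_order {γ u : ℝ} (hγ : 0 < γ) (hu : u ≠ 0) :
    ContinuousAt (fun β => rlKernel β u) γ :=
  ((Real.continuous_const_rpow hu).continuousAt.comp (continuousAt_id.sub continuousAt_const)).div
    (Real.differentiableOn_Gamma_Ioi.differentiableAt (Ioi_mem_nhds hγ)).continuousAt
    (Real.Gamma_pos_of_pos hγ).ne'

theorem exists_abs_rlKernel_le {p q : ℝ} (hp : 0 < p) :
    ∃ M, ∀ β ∈ Icc p q, ∀ u > 0, |rlKernel β u| ≤ M * (u ^ (p - 1) + u ^ (q - 1)) := by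
  have hΓ : ContinuousOn (fun β => (Real.Gamma β)⁻¹) (Icc p q) :=
    (Real.differentiableOn_Gamma_Ioi.continuousOn.mono fun β hβ => hp.trans_le hβ.1).inv₀
      fun β hβ => (Real.Gamma_pos_of_pos (hp.trans_le hβ.1)).ne'
  obtain ⟨M, hM⟩ := isCompact_Icc.exists_bound_of_continuousOn hΓ
  refine ⟨M, fun β hβ u hu => ?_⟩
  have hpow : u ^ (β - 1) ≤ u ^ (p - 1) + u ^ (q - 1) :=
    Real.rpow_le_rpow_add_rpow hu ⟨by linarith [hβ.1], by linarith [hβ.2]⟩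
  rw [rlKernel, div_eq_mul_inv, abs_mul, abs_of_pos (Real.rpow_pos_of_pos hu _), mul_comm]
  exact mul_le_mul (hM β hβ) hpow (Real.rpow_pos_of_pos hu _).le ((norm_nonneg _).trans (hM β hβ))

theorem tendsto_integral_abs_rlKernel_sub {α : ℝ} (hα : 0 < α) (L : ℝ) :
    Tendsto (fun β => ∫ u in Ioc 0 L, |rlKernel β u - rlKernel α u|) (𝓝 α) (𝓝 0) := by
  obtain ⟨M, hM⟩ := exists_abs_rlKernel_le (q := 2 * α) (half_pos hα)
  have hlim := tendsto_integral_filter_of_dominated_convergence (μ := volume.restrict (Ioc 0 L))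
    (F := fun β u => |rlKernel β u - rlKernel α u|) (f := fun _ => 0)
    (fun u => M * (u ^ (α / 2 - 1) + u ^ (2 * α - 1)) + |rlKernel α u|)
    (Eventually.of_forall fun β =>
      ((measurable_rlKernel β).sub (measurable_rlKernel α)).abs.aestronglyMeasurable)
    (by
      filter_upwards [Icc_mem_nhds (by linarith : α / 2 < α) (by linarith : α < 2 * α)] with β hβ
      filter_upwards [ae_restrict_mem measurableSet_Ioc] with u hu
      rw [Real.norm_eq_abs, abs_abs]
      exact (abs_sub _ _).trans (add_le_add_left (hM β hβ u hu.1) _))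
    ((((intervalIntegral.intervalIntegrable_rpow' (by linarith)).1.add
      (intervalIntegral.intervalIntegrable_rpow' (by linarith)).1).const_mul M).add
      (integrableOn_rlKernel hα L).abs)
    (by
      filter_upwards [ae_restrict_mem measurableSet_Ioc] with u hu
      simpa using ((continuousAt_rlKernel_order hα hu.1.ne').sub
        (continuousAt_const (y := rlKernel α u))).abs.tendsto)
  simpa using hlim

theorem enorm_RL_sub_le {a b α β t : ℝ} {f : ℝ → ℝ}
    (hf : AEStronglyMeasurable f (volume.restrict (Icc a b))) (ht : t ∈ Icc a b) :
    ‖RL a β f t - RL a α f t‖ₑ ≤ ∫⁻ s in Icc a b,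
      (Ioc 0 (b - a)).indicator (fun u => ‖rlKernel β u - rlKernel α u‖ₑ) (t - s) * ‖f s‖ₑ := by
  have hsub : Ioc a t ⊆ Icc a b := Ioc_subset_Icc_self.trans (Icc_subset_Icc_right ht.2)
  have hmeas (γ : ℝ) :
      AEStronglyMeasurable (fun s => rlKernel γ (t - s) * f s) (volume.restrict (Ioc a t)) :=
    ((measurable_rlKernel γ).comp (measurable_const_sub t)).aestronglyMeasurable.mul
      (hf.mono_set hsub)
  rw [RL_eq_setIntegral_rlKernel ht.1, RL_eq_setIntegral_rlKernel ht.1]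
  calc _ ≤ ∫⁻ s in Ioc a t, ‖rlKernel β (t - s) * f s - rlKernel α (t - s) * f s‖ₑ :=
        enorm_integral_sub_le_lintegral_enorm_sub (hmeas β) (hmeas α)
    _ = ∫⁻ s in Ioo a t, (Ioc 0 (b - a)).indicator
          (fun u => ‖rlKernel β u - rlKernel α u‖ₑ) (t - s) * ‖f s‖ₑ := by
        rw [← setLIntegral_congr Ioo_ae_eq_Ioc]
        refine setLIntegral_congr_fun measurableSet_Ioo fun s hs => ?_
        have hts : t - s ∈ Ioc 0 (b - a) := ⟨by linarith [hs.2], by linarith [hs.1, ht.2]⟩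
        rw [indicator_of_mem hts, ← sub_mul, enorm_mul]
    _ ≤ _ := lintegral_mono_set (Ioo_subset_Ioc_self.trans hsub)

theorem lintegral_enorm_RL_sub_le {a b α β : ℝ} {f : ℝ → ℝ}
    (hf : AEStronglyMeasurable f (volume.restrict (Icc a b))) :
    ∫⁻ t in Icc a b, ‖RL a β f t - RL a α f t‖ₑ ≤
      (∫⁻ u in Ioc 0 (b - a), ‖rlKernel β u - rlKernel α u‖ₑ) * ∫⁻ s in Icc a b, ‖f s‖ₑ :=
  calc _ ≤ ∫⁻ t in Icc a b, ∫⁻ s in Icc a b, (Ioc 0 (b - a)).indicator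
            (fun u => ‖rlKernel β u - rlKernel α u‖ₑ) (t - s) * ‖f s‖ₑ :=
        setLIntegral_mono' measurableSet_Icc fun t ht => enorm_RL_sub_le hf ht
    _ ≤ ∫⁻ t, ∫⁻ s in Icc a b, (Ioc 0 (b - a)).indicator
            (fun u => ‖rlKernel β u - rlKernel α u‖ₑ) (t - s) * ‖f s‖ₑ :=
        setLIntegral_le_lintegral _ _
    _ = _ := by
        have hk : Measurable fun u => ‖rlKernel β u - rlKernel α u‖ₑ :=
          ((measurable_rlKernel β).sub (measurable_rlKernel α)).enorm
        rw [lintegral_lintegral_sub_mul (hk.indicator measurableSet_Ioc) hf.enorm,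
          lintegral_indicator measurableSet_Ioc]

theorem integral_abs_RL_sub_le {a b α β : ℝ} (hα : 0 < α) (hβ : 0 < β) {f : ℝ → ℝ}
    (hf : IntegrableOn f (Icc a b)) :
    ∫ t in Icc a b, |RL a β f t - RL a α f t| ≤
      (∫ u in Ioc 0 (b - a), |rlKernel β u - rlKernel α u|) * ∫ t in Icc a b, |f t| := by
  have hk_int : IntegrableOn (fun u => rlKernel β u - rlKernel α u) (Ioc 0 (b - a)) :=
    (integrableOn_rlKernel hβ _).sub (integrableOn_rlKernel hα _)
  calc ∫ t in Icc a b, |RL a β f t - RL a α f t|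
      ≤ (∫⁻ t in Icc a b, ‖RL a β f t - RL a α f t‖ₑ).toReal := by
        -- this form needs no measurability of `t ↦ RL a γ f t`
        simpa [Real.enorm_eq_ofReal_abs] using
          (le_abs_self _).trans (norm_integral_le_lintegral_norm (μ := volume.restrict (Icc a b))
            fun t => |RL a β f t - RL a α f t|)
    _ ≤ ((∫⁻ u in Ioc 0 (b - a), ‖rlKernel β u - rlKernel α u‖ₑ) *
          ∫⁻ s in Icc a b, ‖f s‖ₑ).toReal :=
        ENNReal.toReal_mono (ENNReal.mul_ne_top hk_int.2.ne hf.2.ne)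
          (lintegral_enorm_RL_sub_le hf.1)
    _ = _ := by
        simp only [ENNReal.toReal_mul, ← integral_norm_eq_lintegral_enorm hk_int.1,
          ← integral_norm_eq_lintegral_enorm hf.1, Real.norm_eq_abs]

theorem RL_continuous_in_order_general (a b : ℝ) :
    ∀ α > 0, ∀ ε > 0, ∃ δ > 0, ∀ β > 0, |β - α| < δ →
      ∀ f : ℝ → ℝ, IntegrableOn f (Icc a b) → (∫ t in Icc a b, |f t|) ≤ 1 →
        (∫ t in Icc a b, |RL a β f t - RL a α f t|) ≤ ε := by
  intro α hα ε hε
  obtain ⟨δ, hδ, hC⟩ :=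
    Metric.tendsto_nhds_nhds.mp (tendsto_integral_abs_rlKernel_sub hα (b - a)) ε hε
  refine ⟨δ, hδ, fun β hβ hβα f hf hf1 => ?_⟩
  set C := ∫ u in Ioc 0 (b - a), |rlKernel β u - rlKernel α u|
  have hCε : C < ε := by
    simpa [Real.dist_eq, abs_of_nonneg (integral_nonneg fun u => abs_nonneg _)] using hC hβα
  calc ∫ t in Icc a b, |RL a β f t - RL a α f t|
      ≤ C * ∫ t in Icc a b, |f t| := integral_abs_RL_sub_le hα hβ hf
    _ ≤ C * 1 := mul_le_mul_of_nonneg_left hf1 (integral_nonneg fun u => abs_nonneg _)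
    _ ≤ ε := by linarith

/-- The map `α ↦ I_{a⁺}^α` from `(0,∞)` to bounded operators on `L¹[a,b]` is continuous
for the operator norm. -/
theorem RL_continuous_in_order (a b : ℝ) (hab : a ≤ b) :
    ∀ α > 0, ∀ ε > 0, ∃ δ > 0, ∀ β > 0, |β - α| < δ →
      ∀ f : ℝ → ℝ, IntegrableOn f (Icc a b) → (∫ t in Icc a b, |f t|) ≤ 1 →
        (∫ t in Icc a b, |RL a β f t - RL a α f t|) ≤ ε :=
  RL_continuous_in_order_general a b
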